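/- arXiv:1108.0539 — 3 statements merged into one kernel-verified Lean document; each statement's English description precedes it below -/
import Mathlib

section
/- Let a_i > 0 for i = 1,...,m and let f_j, g_j : ℝ → ℝ be Lipschitz with constants L_j^f, L_j^g respectively. If a_i > L_i^f · Σ_{j=1}^m |b_{ji}| + L_i^g · Σ_{j=1}^m |c_{ji}| for every i, then there exists a unique vector x* ∈ ℝ^m satisfying 0 = -a_i x_i* + Σ_j b_{ij} f_j(x_j*) + Σ_j c_{ij} g_j(x_j*) + d_i for all i. -/
/-!
Substituting `y i = a i * x i`, equilibria become the fixed points of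
`T y = (∑ j, b i j * f j (y j / a j) + ∑ j, c i j * g j (y j / a j) + d i)ᵢ`.
In the `ℓ¹` norm the Lipschitz constant of `T` is the largest column sum
`(Lf j * ∑ i, |b i j| + Lg j * ∑ i, |c i j|) / a j`, which the hypothesis makes `< 1`,
so the Banach fixed point theorem gives exactly one equilibrium.
-/

open Finset
open scoped NNReal

variable {ι : Type*} [Fintype ι]

theorem exists_lt_one_forall_le_of_forall_lt_one {k : ι → ℝ} (hk : ∀ j, k j < 1) :
    ∃ K : ℝ≥0, K < 1 ∧ ∀ j, k j ≤ K :=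
  ⟨univ.sup fun j => (k j).toNNReal,
    (Finset.sup_lt_iff one_pos).2 fun j _ => Real.toNNReal_lt_one.2 (hk j),
    fun j => (Real.le_coe_toNNReal _).trans <| by
      exact_mod_cast le_sup (f := fun j => (k j).toNNReal) (mem_univ j)⟩

theorem PiLp.lipschitzWith_one_of_abs_sub_le
    {F : PiLp 1 (fun _ : ι => ℝ) → PiLp 1 (fun _ : ι => ℝ)} {M : ι → ι → ℝ}
    {K : ℝ≥0} (hM : ∀ j, ∑ i, M i j ≤ K)
    (hF : ∀ y z i, |F y i - F z i| ≤ ∑ j, M i j * |y j - z j|) : LipschitzWith K F := by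
  refine LipschitzWith.of_dist_le_mul fun y z => ?_
  simp only [PiLp.dist_eq_of_L1, Real.dist_eq, mul_sum]
  calc ∑ i, |F y i - F z i| ≤ ∑ i, ∑ j, M i j * |y j - z j| :=
        sum_le_sum fun i _ => hF y z i
    _ = ∑ j, (∑ i, M i j) * |y j - z j| := by rw [sum_comm]; simp only [sum_mul]
    _ ≤ ∑ j, (K : ℝ) * |y j - z j| :=
      sum_le_sum fun j _ => mul_le_mul_of_nonneg_right (hM j) (abs_nonneg _)

theorem abs_sum_mul_sub_sum_mul_le {φ : ι → ℝ → ℝ} {L : ι → ℝ}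
    (hφ : ∀ j u v, |φ j u - φ j v| ≤ L j * |u - v|) (w u v : ι → ℝ) :
    |∑ j, w j * φ j (u j) - ∑ j, w j * φ j (v j)| ≤ ∑ j, |w j| * L j * |u j - v j| := by
  rw [← sum_sub_distrib]
  refine (abs_sum_le_sum_abs _ _).trans (sum_le_sum fun j _ => ?_)
  rw [← mul_sub, abs_mul, mul_assoc]
  exact mul_le_mul_of_nonneg_left (hφ j _ _) (abs_nonneg _)

theorem abs_sub_comp_div_le {φ : ℝ → ℝ} {L a : ℝ} (ha : 0 < a)
    (hφ : ∀ u v, |φ u - φ v| ≤ L * |u - v|) (u v : ℝ) :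
    |φ (u / a) - φ (v / a)| ≤ L / a * |u - v| :=
  calc _ ≤ L * |u / a - v / a| := hφ _ _
    _ = L / a * |u - v| := by rw [← sub_div, abs_div, abs_of_pos ha]; ring

section Equilibrium

variable (a d : ι → ℝ) (b c : ι → ι → ℝ) (f g : ι → ℝ → ℝ)

noncomputable def rescaledEquilibriumMap (y : PiLp 1 (fun _ : ι => ℝ)) :
    PiLp 1 (fun _ : ι => ℝ) :=
  WithLp.toLp 1 fun i => ∑ j, b i j * f j (y j / a j) + ∑ j, c i j * g j (y j / a j) + d i

variable {a b c f g} {Lf Lg : ι → ℝ}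

theorem contractingWith_rescaledEquilibriumMap (ha : ∀ i, 0 < a i)
    (hf : ∀ j u v, |f j u - f j v| ≤ Lf j * |u - v|)
    (hg : ∀ j u v, |g j u - g j v| ≤ Lg j * |u - v|) {K : ℝ≥0}
    (hK : ∀ j, (Lf j * ∑ i, |b i j| + Lg j * ∑ i, |c i j|) / a j ≤ K) (hK1 : K < 1) :
    ContractingWith K (rescaledEquilibriumMap a d b c f g) := by
  refine ⟨hK1, PiLp.lipschitzWith_one_of_abs_sub_le
    (M := fun i j => |b i j| * (Lf j / a j) + |c i j| * (Lg j / a j))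
    (fun j => ?_) fun y z i => ?_⟩
  · rw [sum_add_distrib, ← sum_mul, ← sum_mul]
    convert hK j using 1
    ring
  · simp only [rescaledEquilibriumMap, PiLp.toLp_apply, add_mul, sum_add_distrib]
    calc _ = |(∑ j, b i j * f j (y j / a j) - ∑ j, b i j * f j (z j / a j))
          + (∑ j, c i j * g j (y j / a j) - ∑ j, c i j * g j (z j / a j))| := by ring_nf
      _ ≤ _ := (abs_add_le _ _).trans <| add_le_add
          (abs_sum_mul_sub_sum_mul_le (fun j => abs_sub_comp_div_le (ha j) (hf j)) (b i) y z)
          (abs_sum_mul_sub_sum_mul_le (fun j => abs_sub_comp_div_le (ha j) (hg j)) (c i) y z)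

theorem isFixedPt_rescaledEquilibriumMap_iff (ha : ∀ i, a i ≠ 0) (x : ι → ℝ) :
    Function.IsFixedPt (rescaledEquilibriumMap a d b c f g) (WithLp.toLp 1 fun i => a i * x i) ↔
      ∀ i, 0 = -a i * x i + (∑ j, b i j * f j (x j)) + (∑ j, c i j * g j (x j)) + d i := by
  simp only [Function.IsFixedPt, rescaledEquilibriumMap, (WithLp.toLp_injective 1).eq_iff,
    funext_iff, mul_div_cancel_left₀ _ (ha _)]
  exact forall_congr' fun i => by constructor <;> intro h <;> linarith

end Equilibrium

/-- existence and uniqueness of the equilibrium point (Lemma 2.1). -/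
theorem stmt0 (m : ℕ) (a d : Fin m → ℝ) (b c : Fin m → Fin m → ℝ)
    (f g : Fin m → ℝ → ℝ) (Lf Lg : Fin m → ℝ)
    (ha : ∀ i, 0 < a i)
    (hf : ∀ j, ∀ u v : ℝ, |f j u - f j v| ≤ Lf j * |u - v|)
    (hg : ∀ j, ∀ u v : ℝ, |g j u - g j v| ≤ Lg j * |u - v|)
    (hcond : ∀ i, Lf i * ∑ j, |b j i| + Lg i * ∑ j, |c j i| < a i) :
    ∃! x : Fin m → ℝ, ∀ i,
      0 = -a i * x i + (∑ j, b i j * f j (x j)) + (∑ j, c i j * g j (x j)) + d i := by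
  obtain ⟨K, hK1, hK⟩ :=
    exists_lt_one_forall_le_of_forall_lt_one fun j => (div_lt_one (ha j)).2 (hcond j)
  have hT := contractingWith_rescaledEquilibriumMap d ha hf hg hK hK1
  let scale : (Fin m → ℝ) ≃ PiLp 1 (fun _ : Fin m => ℝ) :=
    (Equiv.piCongrRight fun i => Equiv.mulLeft₀ (a i) (ha i).ne').trans (WithLp.equiv 1 _).symm
  refine (scale.existsUnique_congr fun x =>
    (isFixedPt_rescaledEquilibriumMap_iff d (fun i => (ha i).ne') x).symm).2
    ⟨_, hT.fixedPoint_isFixedPt, fun y hy => hT.fixedPoint_unique hy⟩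
end

section
/- Let k₁, k₂, ℓ, θ̄ be positive reals and p a positive integer such that k₂θ̄ + (k₁θ̄ + ℓp)(1 + k₂θ̄)(1 + ℓ)^p e^{k₁θ̄} < 1. Suppose a nonnegative function y : [θ_k, θ_{k+1}) → ℝ (with θ_{k+1} - θ_k ≤ θ̄) satisfies, for all t in this interval, both y(t) ≤ (1 + k₂θ̄)·y(θ_k) + k₁∫_{θ_k}^t y(s) ds + ℓ·Σ_{θ_k ≤ τ_j < t} y(τ_j⁻) and y(θ_k) ≤ y(t) + k₂θ̄·y(θ_k) + k₁∫_{θ_k}^t y(s) ds + ℓ·Σ_{θ_k ≤ τ_j < t} y(τ_j⁻), where at most p points τ_j lie in (θ_k, θ_{k+1}). Then y(θ_k) ≤ λ·y(t) for all t ∈ [θ_k, θ_{k+1}), where λ = (1 - (k₂θ̄ + (k₁θ̄ + ℓp)(1 + k₂θ̄)(1 + ℓ)^p e^{k₁θ̄}))⁻¹. -/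
/-!
The first inequality is an impulsive Gronwall inequality. Between two consecutive jumps its
right-hand side `u` grows at most like `exp (k₁ t)` (classical Gronwall, since `u' = k₁ y ≤ k₁ u`),
and across a jump `τ j` it gains `ℓ * y(τ j⁻) ≤ ℓ * u(τ j)`, so it is multiplied by at most
`1 + ℓ`. Hence `y ≤ B := (1 + k₂ θ̄) (1 + ℓ)^p e^{k₁ θ̄} y(θ_k)` on the whole interval, and also
`y(τ j⁻) ≤ B`. Bounding the integral by `θ̄ B` and the jump sum by `p B` in the second inequality
gives `(1 - H) y(θ_k) ≤ y(t)`, where `H < 1` is the quantity in the hypothesis.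
-/

open Topology Filter Set MeasureTheory Real Function

theorem integrableOn_Icc_of_continuousWithinAt_of_tendsto {E : Type*} [NormedAddCommGroup E]
    {f : ℝ → E} {a b : ℝ} {L : E} (hf : ∀ x ∈ Ico a b, ContinuousWithinAt f (Icc a b) x)
    (hb : Tendsto f (𝓝[Ico a b] b) (𝓝 L)) : IntegrableOn f (Icc a b) := by
  classical
  have hg : ContinuousOn (update f b L) (Icc a b) := by
    intro x hx
    rcases hx.2.eq_or_lt with rfl | hxb
    · rwa [continuousWithinAt_update_same, Icc_sdiff_right]
    · refine (hf x ⟨hx.1, hxb⟩).congr_of_eventuallyEq ?_ (update_of_ne hxb.ne _ _)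
      filter_upwards [mem_nhdsWithin_of_mem_nhds (Iio_mem_nhds hxb)] with z hz
      exact update_of_ne (ne_of_lt hz) _ _
  rw [integrableOn_Icc_iff_integrableOn_Ico]
  exact (hg.integrableOn_Icc.mono_set Ico_subset_Icc_self).congr_fun
    (fun x hx => update_of_ne hx.2.ne _ _) measurableSet_Ico

theorem add_mul_integral_le_mul_exp {y : ℝ → ℝ} {a b C k : ℝ} (hk : 0 ≤ k)
    (hint : IntegrableOn y (Icc a b)) (hrc : ∀ x ∈ Ico a b, ContinuousWithinAt y (Ici x) x)
    (hle : ∀ x ∈ Ico a b, y x ≤ C + k * ∫ t in a..x, y t) :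
    ∀ x ∈ Icc a b, C + k * ∫ t in a..x, y t ≤ C * exp (k * (x - a)) := by
  rcases lt_or_ge b a with hba | hab
  · exact fun x hx => absurd (hx.1.trans hx.2) hba.not_ge
  have hcont : ContinuousOn (fun x => C + k * ∫ t in a..x, y t) (Icc a b) := by
    have := intervalIntegral.continuousOn_primitive_interval (a := a) (b := b)
      (by rwa [uIcc_of_le hab])
    rw [uIcc_of_le hab] at this
    exact continuousOn_const.add (continuousOn_const.mul this)
  have hderiv : ∀ x ∈ Ico a b,
      HasDerivWithinAt (fun x => C + k * ∫ t in a..x, y t) (k * y x) (Ici x) x := by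
    intro x hx
    have hyx : IntervalIntegrable y volume a x :=
      (intervalIntegrable_iff_integrableOn_Icc_of_le hx.1).mpr
        (hint.mono_set (Icc_subset_Icc_right hx.2.le))
    have hmeas : StronglyMeasurableAtFilter y (𝓝[>] x) :=
      ⟨Icc a b, mem_of_superset (Ioo_mem_nhdsGT hx.2) fun z hz => ⟨hx.1.trans hz.1.le, hz.2.le⟩,
        hint.aestronglyMeasurable⟩
    exact ((intervalIntegral.integral_hasDerivWithinAt_right hyx hmeas
      ((hrc x hx).mono Ioi_subset_Ici_self)).const_mul k).const_add C
  intro x hx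
  have := le_gronwallBound_of_liminf_deriv_right_le (δ := C) (K := k) (ε := 0) hcont
    (fun x hx _ hr => (hderiv x hx).liminf_right_slope_le hr) (by simp)
    (fun x hx => by rw [add_zero]; exact mul_le_mul_of_nonneg_left (hle x hx) hk) x hx
  rwa [gronwallBound_ε0] at this

section Jumps

variable {ι : Type*} [Fintype ι]

noncomputable def jumpsBefore (τ : ι → ℝ) (t : ℝ) : Finset ι :=
  Finset.univ.filter fun j => τ j < t

@[simp]
theorem mem_jumpsBefore {τ : ι → ℝ} {t : ℝ} {j : ι} : j ∈ jumpsBefore τ t ↔ τ j < t := by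
  simp [jumpsBefore]

theorem jumpsBefore_mono (τ : ι → ℝ) {t t' : ℝ} (h : t ≤ t') :
    jumpsBefore τ t ⊆ jumpsBefore τ t' :=
  fun _ hj => mem_jumpsBefore.mpr ((mem_jumpsBefore.mp hj).trans_le h)

theorem jumpsBefore_eq_empty {τ : ι → ℝ} {t : ℝ} : jumpsBefore τ t = ∅ ↔ ∀ j, t ≤ τ j := by
  simp [Finset.eq_empty_iff_forall_notMem]

theorem jumpsBefore_eq_insert [DecidableEq ι] {τ : ι → ℝ} (hτ : Injective τ) {j : ι} {s : ℝ}
    (hjs : τ j < s) (hlast : ∀ i, τ i < s → τ i ≤ τ j) :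
    jumpsBefore τ s = insert j (jumpsBefore τ (τ j)) := by
  ext i
  simp only [Finset.mem_insert, mem_jumpsBefore]
  refine ⟨fun hi => ?_, ?_⟩
  · rcases (hlast i hi).lt_or_eq with h | h
    · exact Or.inr h
    · exact Or.inl (hτ h)
  · rintro (rfl | hi)
    exacts [hjs, hi.trans hjs]

theorem induction_on_last_jump (τ : ι → ℝ) {P : ℝ → Prop}
    (base : ∀ s, (∀ j, s ≤ τ j) → P s)
    (step : ∀ j s, τ j < s → (∀ i, τ i < s → τ i ≤ τ j) → P (τ j) → P s) (s : ℝ) : P s := by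
  induction hn : (jumpsBefore τ s).card using Nat.strong_induction_on generalizing s with
  | _ n ih =>
  rcases (jumpsBefore τ s).eq_empty_or_nonempty with h | h
  · exact base s (jumpsBefore_eq_empty.mp h)
  · obtain ⟨j, hj, hmax⟩ := (jumpsBefore τ s).exists_max_image τ h
    have hcard : (jumpsBefore τ (τ j)).card < n :=
      hn ▸ Finset.card_lt_card ⟨jumpsBefore_mono τ (mem_jumpsBefore.mp hj).le,
        fun hsub => (mem_jumpsBefore.mp (hsub hj)).false⟩
    exact step j s (mem_jumpsBefore.mp hj) (fun i hi => hmax i (mem_jumpsBefore.mpr hi))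
      (ih _ hcard _ rfl)

end Jumps

structure PiecewiseContinuousOnIco {ι : Type*} (y : ℝ → ℝ) (a b : ℝ) (τ : ι → ℝ) (yl : ι → ℝ) :
    Prop where
  mem_Ioo : ∀ j, τ j ∈ Ioo a b
  continuousWithinAt : ∀ t ∈ Ico a b, (∀ j, t ≠ τ j) → ContinuousWithinAt y (Ico a b) t
  continuousWithinAt_Ici : ∀ j, ContinuousWithinAt y (Ici (τ j)) (τ j)
  tendsto_nhdsLT : ∀ j, Tendsto y (𝓝[<] τ j) (𝓝 (yl j))

namespace PiecewiseContinuousOnIco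

variable {ι : Type*} {y : ℝ → ℝ} {a b : ℝ} {τ : ι → ℝ} {yl : ι → ℝ}

theorem continuousWithinAt_Ici_of_mem (hy : PiecewiseContinuousOnIco y a b τ yl) {x : ℝ}
    (hx : x ∈ Ico a b) : ContinuousWithinAt y (Ici x) x := by
  by_cases h : ∃ j, x = τ j
  · obtain ⟨j, rfl⟩ := h
    exact hy.continuousWithinAt_Ici j
  · rw [not_exists] at h
    exact (hy.continuousWithinAt x hx h).mono_of_mem_nhdsWithin (Ico_mem_nhdsGE_of_mem hx)

theorem continuousWithinAt_Icc (hy : PiecewiseContinuousOnIco y a b τ yl) {c s x : ℝ}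
    (hc : a ≤ c) (hs : s < b) (hno : ∀ j, τ j ∉ Ioo c s) (hx : x ∈ Ico c s) :
    ContinuousWithinAt y (Icc c s) x := by
  rcases hx.1.eq_or_lt with rfl | hcx
  · exact (hy.continuousWithinAt_Ici_of_mem ⟨hc, hx.2.trans hs⟩).mono Icc_subset_Ici_self
  · exact (hy.continuousWithinAt x ⟨hc.trans hcx.le, hx.2.trans hs⟩
      fun j hj => hno j (hj ▸ ⟨hcx, hx.2⟩)).mono fun z hz => ⟨hc.trans hz.1, hz.2.trans_lt hs⟩

theorem exists_tendsto_nhdsWithin_Ico (hy : PiecewiseContinuousOnIco y a b τ yl) {c s : ℝ}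
    (hc : a ≤ c) (hs : s ∈ Ico a b) : ∃ L, Tendsto y (𝓝[Ico c s] s) (𝓝 L) := by
  by_cases h : ∃ j, s = τ j
  · obtain ⟨j, rfl⟩ := h
    exact ⟨yl j, (hy.tendsto_nhdsLT j).mono_left (nhdsWithin_mono _ fun z hz => hz.2)⟩
  · rw [not_exists] at h
    exact ⟨y s, (hy.continuousWithinAt s hs h).mono fun z hz => ⟨hc.trans hz.1, hz.2.trans hs.2⟩⟩

theorem integrableOn_Icc_of_forall_notMem (hy : PiecewiseContinuousOnIco y a b τ yl) {c s : ℝ}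
    (hc : a ≤ c) (hs : s ∈ Ico a b) (hno : ∀ j, τ j ∉ Ioo c s) : IntegrableOn y (Icc c s) :=
  let ⟨_, hL⟩ := hy.exists_tendsto_nhdsWithin_Ico hc hs
  integrableOn_Icc_of_continuousWithinAt_of_tendsto
    (fun _ hx => hy.continuousWithinAt_Icc hc hs.2 hno hx) hL

theorem integrableOn_Icc [Fintype ι] (hy : PiecewiseContinuousOnIco y a b τ yl) :
    ∀ s ∈ Ico a b, IntegrableOn y (Icc a s) := by
  refine induction_on_last_jump τ (fun s hs' hs => ?_) (fun j s hjs hlast ih hs => ?_)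
  · exact hy.integrableOn_Icc_of_forall_notMem le_rfl hs
      fun j hj => (hj.2.trans_le (hs' j)).false
  · have hj := hy.mem_Ioo j
    rw [← Icc_union_Icc_eq_Icc hj.1.le hjs.le]
    exact (ih ⟨hj.1.le, hj.2⟩).union (hy.integrableOn_Icc_of_forall_notMem hj.1.le hs
      fun i hi => (hi.1.trans_le (hlast i hi.2)).false)

theorem intervalIntegrable [Fintype ι] (hy : PiecewiseContinuousOnIco y a b τ yl) {c d : ℝ}
    (hc : a ≤ c) (hcd : c ≤ d) (hd : d < b) : IntervalIntegrable y volume c d :=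
  (intervalIntegrable_iff_integrableOn_Icc_of_le hcd).mpr
    ((hy.integrableOn_Icc d ⟨hc.trans hcd, hd⟩).mono_set (Icc_subset_Icc_left hc))

theorem leftLim_le (hy : PiecewiseContinuousOnIco y a b τ yl) {M : ℝ} (j : ι)
    (h : ∀ t ∈ Ioo a (τ j), y t ≤ M) : yl j ≤ M :=
  le_of_tendsto (hy.tendsto_nhdsLT j) (mem_of_superset (Ioo_mem_nhdsLT (hy.mem_Ioo j).1) h)

theorem leftLim_nonneg (hy : PiecewiseContinuousOnIco y a b τ yl) (hy0 : ∀ t ∈ Ico a b, 0 ≤ y t)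
    (j : ι) : 0 ≤ yl j :=
  ge_of_tendsto (hy.tendsto_nhdsLT j) (mem_of_superset (Ioo_mem_nhdsLT (hy.mem_Ioo j).1)
    fun t ht => hy0 t ⟨ht.1.le, ht.2.trans (hy.mem_Ioo j).2⟩)

variable [Fintype ι] {A k ℓ : ℝ}

theorem add_integral_add_sum_mono (hy : PiecewiseContinuousOnIco y a b τ yl) (hk : 0 ≤ k)
    (hℓ : 0 ≤ ℓ) (hy0 : ∀ t ∈ Ico a b, 0 ≤ y t) {t t' : ℝ} (ht : a ≤ t) (htt' : t ≤ t')
    (ht' : t' < b) :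
    A + k * (∫ s in a..t, y s) + ℓ * ∑ j ∈ jumpsBefore τ t, yl j
      ≤ A + k * (∫ s in a..t', y s) + ℓ * ∑ j ∈ jumpsBefore τ t', yl j := by
  have hint : ∫ s in a..t, y s ≤ ∫ s in a..t', y s := by
    rw [← intervalIntegral.integral_add_adjacent_intervals
      (hy.intervalIntegrable le_rfl ht (htt'.trans_lt ht')) (hy.intervalIntegrable ht htt' ht')]
    linarith [intervalIntegral.integral_nonneg (μ := volume) htt'
      fun u hu => hy0 u ⟨ht.trans hu.1, hu.2.trans_lt ht'⟩]
  have hsum : ∑ j ∈ jumpsBefore τ t, yl j ≤ ∑ j ∈ jumpsBefore τ t', yl j :=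
    Finset.sum_le_sum_of_subset_of_nonneg (jumpsBefore_mono τ htt')
      fun j _ _ => hy.leftLim_nonneg hy0 j
  gcongr

theorem add_integral_add_sum_le_of_last_jump (hy : PiecewiseContinuousOnIco y a b τ yl)
    (hτ : Injective τ) (hk : 0 ≤ k) (hℓ : 0 ≤ ℓ) (hy0 : ∀ t ∈ Ico a b, 0 ≤ y t)
    (hle : ∀ t ∈ Ico a b,
      y t ≤ A + k * (∫ s in a..t, y s) + ℓ * ∑ j ∈ jumpsBefore τ t, yl j)
    {j : ι} {s : ℝ} (hs : s ∈ Ico a b) (hjs : τ j < s) (hlast : ∀ i, τ i < s → τ i ≤ τ j) :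
    A + k * (∫ t in a..s, y t) + ℓ * ∑ i ∈ jumpsBefore τ s, yl i
      ≤ (1 + ℓ) * (A + k * (∫ t in a..τ j, y t) + ℓ * ∑ i ∈ jumpsBefore τ (τ j), yl i)
        * exp (k * (s - τ j)) := by
  classical
  have hj := hy.mem_Ioo j
  set U := A + k * (∫ t in a..τ j, y t) + ℓ * ∑ i ∈ jumpsBefore τ (τ j), yl i
  set C := A + k * (∫ t in a..τ j, y t) + ℓ * ∑ i ∈ jumpsBefore τ s, yl i
  -- the left limit at the jump is controlled by the (nondecreasing) right-hand side
  have hylU : yl j ≤ U := hy.leftLim_le j fun t ht =>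
    (hle t ⟨ht.1.le, ht.2.trans hj.2⟩).trans
      (hy.add_integral_add_sum_mono hk hℓ hy0 ht.1.le ht.2.le hj.2)
  have hjF : j ∉ jumpsBefore τ (τ j) := by simp
  have hC : C = U + ℓ * yl j := by
    simp only [C, U, jumpsBefore_eq_insert hτ hjs hlast, Finset.sum_insert hjF]
    ring
  have hsplit : ∀ x, τ j ≤ x → x < b →
      ∫ t in a..x, y t = (∫ t in a..τ j, y t) + ∫ t in τ j..x, y t := fun x hjx hx =>
    (intervalIntegral.integral_add_adjacent_intervals
      (hy.intervalIntegrable le_rfl hj.1.le hj.2) (hy.intervalIntegrable hj.1.le hjx hx)).symm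
  have hyC : ∀ x ∈ Ico (τ j) s, y x ≤ C + k * ∫ t in τ j..x, y t := by
    intro x hx
    have hxI : x ∈ Ico a b := ⟨hj.1.le.trans hx.1, hx.2.trans hs.2⟩
    calc y x ≤ A + k * (∫ t in a..x, y t) + ℓ * ∑ i ∈ jumpsBefore τ x, yl i := hle x hxI
      _ ≤ A + k * (∫ t in a..x, y t) + ℓ * ∑ i ∈ jumpsBefore τ s, yl i := by
        gcongr
        · exact fun i _ _ => hy.leftLim_nonneg hy0 i
        · exact jumpsBefore_mono τ hx.2.le
      _ = C + k * ∫ t in τ j..x, y t := by rw [hsplit x hx.1 hxI.2]; ring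
  have hno : ∀ i, τ i ∉ Ioo (τ j) s := fun i hi => (hi.1.trans_le (hlast i hi.2)).false
  calc A + k * (∫ t in a..s, y t) + ℓ * ∑ i ∈ jumpsBefore τ s, yl i
      = C + k * ∫ t in τ j..s, y t := by rw [hsplit s hjs.le hs.2]; ring
    _ ≤ C * exp (k * (s - τ j)) :=
      add_mul_integral_le_mul_exp hk (hy.integrableOn_Icc_of_forall_notMem hj.1.le hs hno)
        (fun x hx => hy.continuousWithinAt_Ici_of_mem ⟨hj.1.le.trans hx.1, hx.2.trans hs.2⟩)
        hyC s ⟨hjs.le, le_rfl⟩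
    _ ≤ (1 + ℓ) * U * exp (k * (s - τ j)) := by
      gcongr
      linarith [mul_le_mul_of_nonneg_left hylU hℓ]

theorem add_integral_add_sum_le (hy : PiecewiseContinuousOnIco y a b τ yl)
    (hτ : Injective τ) (hk : 0 ≤ k) (hℓ : 0 ≤ ℓ) (hy0 : ∀ t ∈ Ico a b, 0 ≤ y t)
    (hle : ∀ t ∈ Ico a b,
      y t ≤ A + k * (∫ s in a..t, y s) + ℓ * ∑ j ∈ jumpsBefore τ t, yl j) :
    ∀ t ∈ Ico a b, A + k * (∫ s in a..t, y s) + ℓ * ∑ j ∈ jumpsBefore τ t, yl j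
      ≤ A * (1 + ℓ) ^ (jumpsBefore τ t).card * exp (k * (t - a)) := by
  classical
  refine induction_on_last_jump τ (fun s hs' hs => ?_) (fun j s hjs hlast ih hs => ?_)
  · have hF : ∀ x ≤ s, jumpsBefore τ x = ∅ :=
      fun x hx => jumpsBefore_eq_empty.mpr fun j => hx.trans (hs' j)
    have hG := add_mul_integral_le_mul_exp hk (hy.integrableOn_Icc s hs)
      (fun x hx => hy.continuousWithinAt_Ici_of_mem ⟨hx.1, hx.2.trans hs.2⟩)
      (fun x hx => by simpa [hF x hx.2.le] using hle x ⟨hx.1, hx.2.trans hs.2⟩) s ⟨hs.1, le_rfl⟩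
    simpa [hF s le_rfl] using hG
  have hj := hy.mem_Ioo j
  have hjF : j ∉ jumpsBefore τ (τ j) := by simp
  calc _ ≤ (1 + ℓ) * (A + k * (∫ t in a..τ j, y t) + ℓ * ∑ i ∈ jumpsBefore τ (τ j), yl i)
        * exp (k * (s - τ j)) :=
      hy.add_integral_add_sum_le_of_last_jump hτ hk hℓ hy0 hle hs hjs hlast
    _ ≤ (1 + ℓ) * (A * (1 + ℓ) ^ (jumpsBefore τ (τ j)).card * exp (k * (τ j - a)))
        * exp (k * (s - τ j)) := by
      gcongr
      exact ih ⟨hj.1.le, hj.2⟩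
    _ = A * (1 + ℓ) ^ (jumpsBefore τ s).card * exp (k * (s - a)) := by
      rw [jumpsBefore_eq_insert hτ hjs hlast, Finset.card_insert_of_notMem hjF, pow_succ,
        show k * (s - a) = k * (τ j - a) + k * (s - τ j) by ring, exp_add]
      ring

theorem le_of_le_add_integral_add_sum (hy : PiecewiseContinuousOnIco y a b τ yl)
    (hτ : Injective τ) (hk : 0 ≤ k) (hℓ : 0 ≤ ℓ) (hy0 : ∀ t ∈ Ico a b, 0 ≤ y t) (hA : 0 ≤ A)
    (hle : ∀ t ∈ Ico a b,
      y t ≤ A + k * (∫ s in a..t, y s) + ℓ * ∑ j ∈ jumpsBefore τ t, yl j)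
    {N : ℕ} {T : ℝ} (hN : Fintype.card ι ≤ N) (hT : b - a ≤ T) :
    ∀ t ∈ Ico a b, y t ≤ A * (1 + ℓ) ^ N * exp (k * T) := by
  intro t ht
  calc y t ≤ A + k * (∫ s in a..t, y s) + ℓ * ∑ j ∈ jumpsBefore τ t, yl j := hle t ht
    _ ≤ A * (1 + ℓ) ^ (jumpsBefore τ t).card * exp (k * (t - a)) :=
      hy.add_integral_add_sum_le hτ hk hℓ hy0 hle t ht
    _ ≤ A * (1 + ℓ) ^ N * exp (k * T) := by
      gcongr
      · linarith
      · exact (Finset.card_le_univ _).trans hN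
      · linarith [ht.2]

theorem integral_le_of_le (hy : PiecewiseContinuousOnIco y a b τ yl) {B T : ℝ} (hB : 0 ≤ B)
    (hyB : ∀ s ∈ Ico a b, y s ≤ B) (hT : b - a ≤ T) {t : ℝ} (ht : t ∈ Ico a b) :
    ∫ s in a..t, y s ≤ T * B :=
  calc ∫ s in a..t, y s ≤ ∫ _ in a..t, B :=
        intervalIntegral.integral_mono_on ht.1 (hy.intervalIntegrable le_rfl ht.1 ht.2)
          intervalIntegrable_const fun s hs => hyB s ⟨hs.1, hs.2.trans_lt ht.2⟩
    _ = (t - a) * B := by simp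
    _ ≤ T * B := by gcongr; linarith [ht.2]

theorem sum_leftLim_le (hy : PiecewiseContinuousOnIco y a b τ yl) {B : ℝ} (hB : 0 ≤ B)
    (hyB : ∀ s ∈ Ico a b, y s ≤ B) {N : ℕ} (hN : Fintype.card ι ≤ N) (t : ℝ) :
    ∑ j ∈ jumpsBefore τ t, yl j ≤ N * B := by
  refine (Finset.sum_le_card_nsmul _ _ B fun j _ => hy.leftLim_le j fun s hs =>
    hyB s ⟨hs.1.le, hs.2.trans (hy.mem_Ioo j).2⟩).trans ?_
  rw [nsmul_eq_mul]
  gcongr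
  exact (Finset.card_le_univ _).trans hN

end PiecewiseContinuousOnIco

open Classical in
theorem stmt2_general (k₁ k₂ ℓ θb lam : ℝ) (p : ℕ) (θk θk1 : ℝ) (q : ℕ) (τ : Fin q → ℝ)
    (y : ℝ → ℝ) (yl : Fin q → ℝ)
    (hk₁ : 0 < k₁) (hk₂ : 0 < k₂) (hℓ : 0 < ℓ) (hθb : 0 < θb)
    (hθ : θk < θk1) (hgap : θk1 - θk ≤ θb) (hq : q ≤ p)
    (hτmono : StrictMono τ) (hτmem : ∀ j, τ j ∈ Set.Ioo θk θk1)
    (hy0 : ∀ t ∈ Set.Ico θk θk1, 0 ≤ y t)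
    (hcont : ∀ t ∈ Set.Ico θk θk1, (∀ j, t ≠ τ j) → ContinuousWithinAt y (Set.Ico θk θk1) t)
    (hrc : ∀ j, ContinuousWithinAt y (Set.Ici (τ j)) (τ j))
    (hll : ∀ j, Filter.Tendsto y (𝓝[<] τ j) (𝓝 (yl j)))
    (hH4 : k₂ * θb + (k₁ * θb + ℓ * p) * (1 + k₂ * θb) * (1 + ℓ) ^ p * Real.exp (k₁ * θb) < 1)
    (hlam : lam = (1 - (k₂ * θb + (k₁ * θb + ℓ * p) * (1 + k₂ * θb) * (1 + ℓ) ^ p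
        * Real.exp (k₁ * θb)))⁻¹)
    (hineq1 : ∀ t ∈ Set.Ico θk θk1,
      y t ≤ (1 + k₂ * θb) * y θk + k₁ * (∫ s in θk..t, y s)
        + ℓ * ∑ j ∈ Finset.univ.filter (fun j => τ j < t), yl j)
    (hineq2 : ∀ t ∈ Set.Ico θk θk1,
      y θk ≤ y t + k₂ * θb * y θk + k₁ * (∫ s in θk..t, y s)
        + ℓ * ∑ j ∈ Finset.univ.filter (fun j => τ j < t), yl j) :
    ∀ t ∈ Set.Ico θk θk1, y θk ≤ lam * y t := by
  intro t ht
  have hy : PiecewiseContinuousOnIco y θk θk1 τ yl := ⟨hτmem, hcont, hrc, hll⟩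
  obtain ⟨B, hB⟩ : ∃ B, B = (1 + k₂ * θb) * y θk * (1 + ℓ) ^ p * exp (k₁ * θb) := ⟨_, rfl⟩
  have hyθk : 0 ≤ y θk := hy0 θk ⟨le_rfl, hθ⟩
  have hB0 : 0 ≤ B := hB ▸ by positivity
  have hcard : Fintype.card (Fin q) ≤ p := by simpa using hq
  have hyB : ∀ s ∈ Ico θk θk1, y s ≤ B := hB ▸
    hy.le_of_le_add_integral_add_sum hτmono.injective hk₁.le hℓ.le hy0 (by positivity)
      hineq1 hcard hgap
  have hint := mul_le_mul_of_nonneg_left (hy.integral_le_of_le hB0 hyB hgap ht) hk₁.le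
  have hsum : ℓ * ∑ j ∈ Finset.univ.filter (fun j => τ j < t), yl j ≤ ℓ * (p * B) :=
    mul_le_mul_of_nonneg_left (hy.sum_leftLim_le hB0 hyB hcard t) hℓ.le
  rw [hlam, le_inv_mul_iff₀ (by linarith)]
  subst hB
  linarith [hineq2 t ht]

open Classical in
theorem stmt2 (k₁ k₂ ℓ θb lam : ℝ) (p : ℕ) (θk θk1 : ℝ) (q : ℕ) (τ : Fin q → ℝ)
    (y : ℝ → ℝ) (yl : Fin q → ℝ)
    (hk₁ : 0 < k₁) (hk₂ : 0 < k₂) (hℓ : 0 < ℓ) (hθb : 0 < θb) (hp : 0 < p)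
    (hθ : θk < θk1) (hgap : θk1 - θk ≤ θb) (hq : q ≤ p)
    (hτmono : StrictMono τ) (hτmem : ∀ j, τ j ∈ Set.Ioo θk θk1)
    (hy0 : ∀ t ∈ Set.Ico θk θk1, 0 ≤ y t)
    (hcont : ∀ t ∈ Set.Ico θk θk1, (∀ j, t ≠ τ j) → ContinuousWithinAt y (Set.Ico θk θk1) t)
    (hrc : ∀ j, ContinuousWithinAt y (Set.Ici (τ j)) (τ j))
    (hll : ∀ j, Filter.Tendsto y (𝓝[<] τ j) (𝓝 (yl j)))
    (hH4 : k₂ * θb + (k₁ * θb + ℓ * p) * (1 + k₂ * θb) * (1 + ℓ) ^ p * Real.exp (k₁ * θb) < 1)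
    (hlam : lam = (1 - (k₂ * θb + (k₁ * θb + ℓ * p) * (1 + k₂ * θb) * (1 + ℓ) ^ p
        * Real.exp (k₁ * θb)))⁻¹)
    (hineq1 : ∀ t ∈ Set.Ico θk θk1,
      y t ≤ (1 + k₂ * θb) * y θk + k₁ * (∫ s in θk..t, y s)
        + ℓ * ∑ j ∈ Finset.univ.filter (fun j => τ j < t), yl j)
    (hineq2 : ∀ t ∈ Set.Ico θk θk1,
      y θk ≤ y t + k₂ * θb * y θk + k₁ * (∫ s in θk..t, y s)
        + ℓ * ∑ j ∈ Finset.univ.filter (fun j => τ j < t), yl j) :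
    ∀ t ∈ Set.Ico θk θk1, y θk ≤ lam * y t :=
  stmt2_general k₁ k₂ ℓ θb lam p θk θk1 q τ y yl hk₁ hk₂ hℓ hθb hθ hgap hq hτmono hτmem hy0 hcont
    hrc hll hH4 hlam hineq1 hineq2
end

section
/- Let a > 0, ω > 0, and h : [0, ω] → ℝ be continuous, and let impulse values I_1, ..., I_p ∈ ℝ be attached to points 0 < τ_1 < ... < τ_p < ω. Define x(t) = ∫_0^ω G(t,s) h(s) ds + Σ_{k=1}^p G(t, τ_k) I_k with G as the Green's function G(t,s) = (1 - e^{-aω})⁻¹ e^{-a(t-s)} if s ≤ t and (1 - e^{-aω})⁻¹ e^{-a(ω+t-s)} if t < s. Then x(0) = x(ω), and on each interval between consecutive points of {0, τ_1, ..., τ_p, ω}, x is differentiable with x'(t) = -a x(t) + h(t), while at each τ_k, x(τ_k) - x(τ_k⁻) = I_k. -/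
open Topology Filter Set

/-- The Green's function for the periodic problem x' = -a x + h. -/
noncomputable def G5 (a ω t s : ℝ) : ℝ :=
  if s ≤ t then (1 - Real.exp (-(a * ω)))⁻¹ * Real.exp (-(a * (t - s)))
  else (1 - Real.exp (-(a * ω)))⁻¹ * Real.exp (-(a * (ω + t - s)))

/-!
Writing `κ = (e^{aω} - 1)⁻¹`, the Green's function factors as
`G(t, s) = e^{-at} e^{as} (κ + 1_{s ≤ t})`. Hence on `[0, ω]` the solution is
`x(t) = e^{-at} (κ Y(ω) + Y(t))`, where `Y(t) = ∫₀ᵗ e^{as} h(s) ds + Σ_{τ_k ≤ t} e^{aτ_k} I_k`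
is the variation-of-constants primitive. `Y` is differentiable with `Y' = e^{at} h` away from
the `τ_k` and jumps by `e^{aτ_k} I_k` at `τ_k`, which gives the equation and the impulse
conditions; periodicity is the identity `e^{-aω} (κ + 1) = κ`.
-/

open Real

section StepSum

variable {ι : Type*} [Fintype ι]

lemma eventually_le_iff_le_of_ne {t₀ s : ℝ} (hs : s ≠ t₀) : ∀ᶠ t in 𝓝 t₀, (s ≤ t ↔ s ≤ t₀) := by
  rcases hs.lt_or_gt with hlt | hgt
  · filter_upwards [lt_mem_nhds hlt] with t ht using iff_of_true ht.le hlt.le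
  · filter_upwards [gt_mem_nhds hgt] with t ht using iff_of_false ht.not_ge hgt.not_ge

lemma stepSum_eventuallyEq_nhds (τ c : ι → ℝ) {t₀ : ℝ} (ht₀ : ∀ k, t₀ ≠ τ k) :
    (fun t => ∑ k, if τ k ≤ t then c k else 0) =ᶠ[𝓝 t₀]
      fun _ => ∑ k, if τ k ≤ t₀ then c k else 0 := by
  filter_upwards [eventually_all.2 fun k => eventually_le_iff_le_of_ne (ht₀ k).symm] with t ht
  simp only [ht]

lemma stepSum_eventuallyEq_nhdsLT (c : ι → ℝ) {τ : ι → ℝ} (hτ : Function.Injective τ) (k : ι) :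
    (fun t => ∑ j, if τ j ≤ t then c j else 0) =ᶠ[𝓝[<] τ k]
      fun _ => (∑ j, if τ j ≤ τ k then c j else 0) - c k := by
  classical
  have hothers : ∀ᶠ t in 𝓝[<] τ k, ∀ j ∈ Finset.univ.erase k, (τ j ≤ t ↔ τ j ≤ τ k) :=
    nhdsWithin_le_nhds <| (Finset.eventually_all _).2 fun j hj =>
      eventually_le_iff_le_of_ne (hτ.ne (Finset.ne_of_mem_erase hj))
  filter_upwards [hothers, self_mem_nhdsWithin] with t ht (htk : t < τ k)
  have hsum : (∑ j ∈ Finset.univ.erase k, if τ j ≤ t then c j else 0)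
      = ∑ j ∈ Finset.univ.erase k, if τ j ≤ τ k then c j else 0 :=
    Finset.sum_congr rfl fun j hj => by simp only [ht j hj]
  rw [← Finset.add_sum_erase _ _ (Finset.mem_univ k),
    ← Finset.add_sum_erase _ _ (Finset.mem_univ k), hsum, if_neg htk.not_ge, if_pos le_rfl]
  ring

end StepSum

section Primitive

variable {ι : Type*} [Fintype ι]

noncomputable def impulsivePrimitive (a : ℝ) (h : ℝ → ℝ) (τ I : ι → ℝ) (t : ℝ) : ℝ :=
  (∫ s in (0 : ℝ)..t, exp (a * s) * h s) + ∑ k, if τ k ≤ t then exp (a * τ k) * I k else 0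

variable {a ω : ℝ} {h : ℝ → ℝ}

lemma continuousOn_exp_mul_mul (hh : ContinuousOn h (Icc 0 ω)) :
    ContinuousOn (fun s => exp (a * s) * h s) (Icc 0 ω) := by
  fun_prop

lemma hasDerivAt_integral_exp_mul_mul (hh : ContinuousOn h (Icc 0 ω)) {t : ℝ} (ht : t ∈ Ioo 0 ω) :
    HasDerivAt (fun u => ∫ s in (0 : ℝ)..u, exp (a * s) * h s) (exp (a * t) * h t) t := by
  have hcont := continuousOn_exp_mul_mul (a := a) hh
  refine intervalIntegral.integral_hasDerivAt_right
    (hcont.mono ?_).intervalIntegrable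
    ((hcont.mono Ioo_subset_Icc_self).stronglyMeasurableAtFilter isOpen_Ioo _ ht)
    (hcont.continuousAt (Icc_mem_nhds ht.1 ht.2))
  rw [uIcc_of_le ht.1.le]
  exact Icc_subset_Icc_right ht.2.le

lemma hasDerivAt_impulsivePrimitive (hh : ContinuousOn h (Icc 0 ω)) (τ I : ι → ℝ) {t : ℝ}
    (ht : t ∈ Ioo 0 ω) (hτt : ∀ k, t ≠ τ k) :
    HasDerivAt (impulsivePrimitive a h τ I) (exp (a * t) * h t) t :=
  ((hasDerivAt_integral_exp_mul_mul hh ht).add_const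
    (∑ k, if τ k ≤ t then exp (a * τ k) * I k else 0)).congr_of_eventuallyEq <|
    (stepSum_eventuallyEq_nhds τ (fun k => exp (a * τ k) * I k) hτt).mono fun _ hu =>
      congrArg (_ + ·) hu

lemma tendsto_impulsivePrimitive_nhdsLT (hh : ContinuousOn h (Icc 0 ω)) {τ : ι → ℝ}
    (hτ : Function.Injective τ) (I : ι → ℝ) {k : ι} (hk : τ k ∈ Ioo 0 ω) :
    Tendsto (impulsivePrimitive a h τ I) (𝓝[<] τ k)
      (𝓝 (impulsivePrimitive a h τ I (τ k) - exp (a * τ k) * I k)) := by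
  have hF := (hasDerivAt_integral_exp_mul_mul (a := a) hh hk).continuousAt.tendsto
  have hlim := (hF.add_const ((∑ j, if τ j ≤ τ k then exp (a * τ j) * I j else 0)
    - exp (a * τ k) * I k)).mono_left (nhdsWithin_le_nhds (s := Iio (τ k)))
  rw [impulsivePrimitive, add_sub_assoc]
  refine hlim.congr' ?_
  filter_upwards [stepSum_eventuallyEq_nhdsLT (fun j => exp (a * τ j) * I j) hτ k] with t ht
  exact congrArg (_ + ·) ht.symm

lemma impulsivePrimitive_zero {τ : ι → ℝ} (hτ : ∀ k, 0 < τ k) (I : ι → ℝ) :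
    impulsivePrimitive a h τ I 0 = 0 := by
  simp [impulsivePrimitive, fun k => (hτ k).not_ge]

end Primitive

lemma hasDerivAt_exp_neg_mul_mul {a g t : ℝ} {y : ℝ → ℝ} (hy : HasDerivAt y (exp (a * t) * g) t) :
    HasDerivAt (fun s => exp (-(a * s)) * y s) (-a * (exp (-(a * t)) * y t) + g) t := by
  have hE : HasDerivAt (fun s => exp (-(a * s))) (exp (-(a * t)) * -a) t := by
    simpa using ((hasDerivAt_id t).const_mul a).neg.exp
  have hinv : exp (-(a * t)) * exp (a * t) = 1 := by rw [← exp_add, neg_add_cancel, exp_zero]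
  exact (hE.mul hy).congr_deriv (by linear_combination g * hinv)

lemma tendsto_exp_neg_mul_mul_nhdsLT {a c t : ℝ} {y : ℝ → ℝ}
    (hy : Tendsto y (𝓝[<] t) (𝓝 (y t - exp (a * t) * c))) :
    Tendsto (fun s => exp (-(a * s)) * y s) (𝓝[<] t) (𝓝 (exp (-(a * t)) * y t - c)) := by
  have hE : Tendsto (fun s => exp (-(a * s))) (𝓝[<] t) (𝓝 (exp (-(a * t)))) :=
    ((by fun_prop : Continuous fun s => exp (-(a * s))).tendsto t).mono_left nhdsWithin_le_nhds
  have hinv : exp (-(a * t)) * exp (a * t) = 1 := by rw [← exp_add, neg_add_cancel, exp_zero]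
  convert hE.mul hy using 2
  linear_combination c * hinv

section Green

variable {a ω : ℝ}

lemma G5_eq_exp_mul_exp (haω : a * ω ≠ 0) (t s : ℝ) :
    G5 a ω t s = exp (-(a * t)) * exp (a * s) * ((exp (a * ω) - 1)⁻¹ + if s ≤ t then 1 else 0) := by
  have hE : exp (a * ω) - 1 ≠ 0 := sub_ne_zero.2 (by simpa using haω)
  unfold G5
  split_ifs
  · rw [show -(a * (t - s)) = -(a * t) + a * s by ring, exp_add, exp_neg (a * ω)]
    field_simp
    ring
  · rw [show -(a * (ω + t - s)) = -(a * t) + a * s - a * ω by ring, exp_sub, exp_add,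
      exp_neg (a * ω)]
    field_simp
    ring

lemma integral_G5_mul (haω : a * ω ≠ 0) {h : ℝ → ℝ} (hh : ContinuousOn h (Icc 0 ω)) {t : ℝ}
    (ht : t ∈ Icc 0 ω) :
    ∫ s in (0 : ℝ)..ω, G5 a ω t s * h s = exp (-(a * t)) *
      ((exp (a * ω) - 1)⁻¹ * (∫ s in (0 : ℝ)..ω, exp (a * s) * h s)
        + ∫ s in (0 : ℝ)..t, exp (a * s) * h s) := by
  set f := fun s => exp (a * s) * h s
  have hω : 0 ≤ ω := ht.1.trans ht.2
  have hf : IntervalIntegrable f MeasureTheory.volume 0 ω :=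
    (continuousOn_exp_mul_mul hh).intervalIntegrable_of_Icc hω
  have hfIic : IntervalIntegrable ({s | s ≤ t}.indicator f) MeasureTheory.volume 0 ω := by
    rw [intervalIntegrable_iff_integrableOn_Ioc_of_le hω] at hf ⊢
    exact hf.indicator measurableSet_Iic
  have hG : (fun s => G5 a ω t s * h s)
      = fun s => exp (-(a * t)) * ((exp (a * ω) - 1)⁻¹ * f s + {s | s ≤ t}.indicator f s) := by
    ext s
    by_cases hs : s ≤ t <;> simp [G5_eq_exp_mul_exp haω, f, hs] <;> ring
  rw [hG, intervalIntegral.integral_const_mul, intervalIntegral.integral_add (hf.const_mul _) hfIic,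
    intervalIntegral.integral_const_mul, intervalIntegral.integral_indicator ht]

lemma sum_G5_mul (haω : a * ω ≠ 0) {ι : Type*} [Fintype ι] (τ I : ι → ℝ) (t : ℝ) :
    ∑ k, G5 a ω t (τ k) * I k = exp (-(a * t)) *
      ((exp (a * ω) - 1)⁻¹ * (∑ k, exp (a * τ k) * I k)
        + ∑ k, if τ k ≤ t then exp (a * τ k) * I k else 0) := by
  rw [Finset.mul_sum, ← Finset.sum_add_distrib, Finset.mul_sum]
  refine Finset.sum_congr rfl fun k _ => ?_
  rw [G5_eq_exp_mul_exp haω]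
  split_ifs <;> ring

lemma greenSolution_eq (haω : a * ω ≠ 0) {h : ℝ → ℝ} (hh : ContinuousOn h (Icc 0 ω))
    {ι : Type*} [Fintype ι] {τ : ι → ℝ} (hτ : ∀ k, τ k ≤ ω) (I : ι → ℝ) {t : ℝ}
    (ht : t ∈ Icc 0 ω) :
    (∫ s in (0 : ℝ)..ω, G5 a ω t s * h s) + ∑ k, G5 a ω t (τ k) * I k = exp (-(a * t)) *
      ((exp (a * ω) - 1)⁻¹ * impulsivePrimitive a h τ I ω + impulsivePrimitive a h τ I t) := by
  simp only [integral_G5_mul haω hh ht, sum_G5_mul haω, impulsivePrimitive, hτ, if_true]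
  ring

end Green

theorem stmt5 (a ω : ℝ) (p : ℕ) (h : ℝ → ℝ) (I : Fin p → ℝ) (τ : Fin p → ℝ)
    (x : ℝ → ℝ)
    (ha : 0 < a) (hω : 0 < ω) (hh : ContinuousOn h (Set.Icc 0 ω))
    (hτ : StrictMono τ) (hτmem : ∀ k, τ k ∈ Set.Ioo 0 ω)
    (hx : ∀ t, x t = (∫ s in (0 : ℝ)..ω, G5 a ω t s * h s) + ∑ k, G5 a ω t (τ k) * I k) :
    x 0 = x ω
    ∧ (∀ t ∈ Set.Ioo (0 : ℝ) ω, (∀ k, t ≠ τ k) → HasDerivAt x (-a * x t + h t) t)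
    ∧ (∀ k, Filter.Tendsto x (𝓝[<] τ k) (𝓝 (x (τ k) - I k))) := by
  have haω : a * ω ≠ 0 := (mul_pos ha hω).ne'
  set Y := impulsivePrimitive a h τ I
  set C := (exp (a * ω) - 1)⁻¹ * Y ω
  have hxY : ∀ t ∈ Icc 0 ω, x t = exp (-(a * t)) * (C + Y t) := fun t ht =>
    (hx t).trans (greenSolution_eq haω hh (fun k => (hτmem k).2.le) I ht)
  have hxY_nhds : ∀ t ∈ Ioo 0 ω, x =ᶠ[𝓝 t] fun s => exp (-(a * s)) * (C + Y s) := fun t ht =>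
    eventually_of_mem (Ioo_mem_nhds ht.1 ht.2) fun s hs => hxY s (Ioo_subset_Icc_self hs)
  refine ⟨?_, fun t ht hτt => ?_, fun k => ?_⟩
  · have hE : exp (a * ω) - 1 ≠ 0 := sub_ne_zero.2 (by simpa using haω)
    have hY0 : Y 0 = 0 := impulsivePrimitive_zero (fun k => (hτmem k).1) I
    rw [hxY 0 (left_mem_Icc.2 hω.le), hxY ω (right_mem_Icc.2 hω.le), hY0]
    simp only [C, exp_neg (a * ω), mul_zero, neg_zero, exp_zero, add_zero, one_mul]
    field_simp
    ring
  · rw [(hxY_nhds t ht).eq_of_nhds]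
    exact (hasDerivAt_exp_neg_mul_mul ((hasDerivAt_impulsivePrimitive hh τ I ht hτt).const_add C))
      |>.congr_of_eventuallyEq (hxY_nhds t ht)
  · have hY := (tendsto_impulsivePrimitive_nhdsLT (a := a) hh hτ.injective I (hτmem k)).const_add C
    rw [← add_sub_assoc] at hY
    rw [(hxY_nhds (τ k) (hτmem k)).eq_of_nhds]
    exact (tendsto_exp_neg_mul_mul_nhdsLT hY).congr'
      ((hxY_nhds (τ k) (hτmem k)).filter_mono nhdsWithin_le_nhds).symm
end
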